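/- arXiv:math/0604477 — 4 statements merged into one kernel-verified Lean document; each statement's English description precedes it below -/
import Mathlib

section
/- Let δ be a locally nilpotent K-derivation of A and (x^[i])_{i≥0} an infinite iterative δ-descent, and let φ(a) := Σ_{i≥0} (-1)^i x^[i]·δ^i(a), ψ(a) := Σ_{i≥0} (-1)^i δ^i(a)·x^[i]. Then every a ∈ A satisfies the Taylor-type expansions a = Σ_{i≥0} x^[i]·φ(δ^i(a)) = Σ_{i≥0} ψ(δ^i(a))·x^[i] (finite sums). If, in addition, all elements x^[i] are central in A, then φ and ψ are A^δ-algebra homomorphisms (in particular multiplicative). -/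
/-!
The maps `φ` and `ψ` are Dixmier maps, with `x i` in the role of `s ^ i / i!` for a slice `s`.
By `x i * x j = (i + j).choose i • x (i + j)`, the double sum `∑ i, x i * φ (δ ^ i a)` regroups
along antidiagonals as `∑ n, (∑ i + j = n, (-1) ^ j * n.choose i) • x n * δ ^ n a`, and the inner
sum is `(1 - 1) ^ n`, so only the term `x 0 * a = a` survives; likewise for `ψ`. When the `x i`
are central, `φ = ψ`, and the same antidiagonal regrouping of `φ a * φ b`, combined with the
Leibniz formula for `δ ^ n (a * b)`, gives `φ (a * b)`. Finally `φ` fixes every constant, so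
multiplicativity makes it `A^δ`-linear.
-/

open Finset

section Combinatorics

theorem finsum_eq_sum_range_of_eq_zero_of_le {M : Type*} [AddCommMonoid M] {f : ℕ → M} {N : ℕ}
    (h : ∀ i, N ≤ i → f i = 0) : ∑ᶠ i, f i = ∑ i ∈ range N, f i :=
  finsum_eq_sum_of_support_subset f fun i hi => by simpa using not_le.1 (mt (h i) hi)

theorem sum_range_sum_range_eq_sum_range_sum_antidiagonal {M : Type*} [AddCommMonoid M]
    (N : ℕ) (g : ℕ → ℕ → M) (h : ∀ i j, N ≤ i + j → g i j = 0) :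
    ∑ i ∈ range N, ∑ j ∈ range N, g i j = ∑ n ∈ range N, ∑ p ∈ antidiagonal n, g p.1 p.2 := by
  simp_rw [Nat.sum_antidiagonal_eq_sum_range_succ g, sum_range_diag_flip]
  refine sum_congr rfl fun i _ => (sum_subset (range_subset_range.2 (N.sub_le i)) ?_).symm
  intro j _ hj
  exact h i j (by rw [mem_range] at hj; omega)

theorem sum_antidiagonal_neg_one_pow_mul_choose (n : ℕ) :
    ∑ p ∈ antidiagonal n, (-1 : ℤ) ^ p.2 * n.choose p.1 = 0 ^ n := by
  simpa [mul_comm] using ((Commute.one_left (-1 : ℤ)).add_pow' n).symm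

theorem sum_range_sum_range_neg_one_pow_mul_choose_zsmul {M : Type*} [AddCommGroup M]
    {c : ℕ → M} {N : ℕ} (hc : ∀ n, N ≤ n → c n = 0) :
    ∑ i ∈ range N, ∑ j ∈ range N, ((-1) ^ j * (i + j).choose i : ℤ) • c (i + j) = c 0 := by
  rw [sum_range_sum_range_eq_sum_range_sum_antidiagonal N _
    fun i j hij => by rw [hc _ hij, smul_zero]]
  have hdiag : ∀ n, ∑ p ∈ antidiagonal n,
      ((-1) ^ p.2 * (p.1 + p.2).choose p.1 : ℤ) • c (p.1 + p.2) = (0 ^ n : ℤ) • c n := by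
    intro n
    rw [← sum_antidiagonal_neg_one_pow_mul_choose, sum_smul]
    exact sum_congr rfl fun p hp => by rw [mem_antidiagonal.1 hp]
  simp_rw [hdiag]
  cases N with
  | zero => simp [hc]
  | succ N => simp [sum_range_succ']

end Combinatorics

section Iterates

variable {R A : Type*} [Semiring R] [Ring A] [Module R A] {δ : Module.End R A}

theorem pow_apply_pow_apply (i j : ℕ) (a : A) : (δ ^ j) ((δ ^ i) a) = (δ ^ (i + j)) a := by
  rw [← Module.End.mul_apply, ← pow_add, add_comm]

theorem pow_apply_pow_apply_eq_zero {a : A} {N : ℕ} (h : (δ ^ N) a = 0) (i : ℕ) :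
    (δ ^ N) ((δ ^ i) a) = 0 := by
  rw [pow_apply_pow_apply, add_comm, ← pow_apply_pow_apply, h, map_zero]

variable (hleib : ∀ a b, δ (a * b) = δ a * b + a * δ b)
include hleib

theorem map_one_eq_zero_of_leibniz : δ 1 = 0 := by
  simpa using hleib 1 1

theorem pow_apply_mul_of_leibniz (a b : A) (n : ℕ) :
    (δ ^ n) (a * b) = ∑ p ∈ antidiagonal n, n.choose p.1 • ((δ ^ p.1) a * (δ ^ p.2) b) := by
  induction n with
  | zero => simp
  | succ n ih =>
    rw [sum_antidiagonal_choose_succ_nsmul (fun i j => (δ ^ i) a * (δ ^ j) b) n]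
    simp only [pow_succ', Module.End.mul_apply, ih, map_sum, map_nsmul, hleib, nsmul_add,
      sum_add_distrib]
    rw [add_comm, add_right_inj]
    refine sum_congr rfl fun p hp => ?_
    rw [Nat.choose_symm_of_eq_add (mem_antidiagonal.1 hp).symm]

theorem pow_add_apply_mul_eq_zero_of_leibniz {a b : A} {M N : ℕ} (ha : (δ ^ M) a = 0)
    (hb : (δ ^ N) b = 0) : (δ ^ (M + N)) (a * b) = 0 := by
  rw [pow_apply_mul_of_leibniz hleib]
  refine sum_eq_zero fun p hp => ?_
  rcases le_or_gt M p.1 with hM | hM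
  · rw [Module.End.pow_map_zero_of_le hM ha, zero_mul, smul_zero]
  · rw [Module.End.pow_map_zero_of_le (by have := mem_antidiagonal.1 hp; omega) hb, mul_zero,
      smul_zero]

end Iterates

section DixmierMap

variable {R A : Type*} [Semiring R] [Ring A] [Module R A] (δ : Module.End R A) (x : ℕ → A)

noncomputable def leftDixmierMap (a : A) : A := ∑ᶠ i, (-1 : A) ^ i * (x i * (δ ^ i) a)

noncomputable def rightDixmierMap (a : A) : A := ∑ᶠ i, (-1 : A) ^ i * ((δ ^ i) a * x i)

variable {δ x}

theorem leftDixmierMap_eq_sum_range {a : A} {N : ℕ} (h : (δ ^ N) a = 0) :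
    leftDixmierMap δ x a = ∑ i ∈ range N, (-1 : A) ^ i * (x i * (δ ^ i) a) :=
  finsum_eq_sum_range_of_eq_zero_of_le fun i hi => by
    rw [Module.End.pow_map_zero_of_le hi h, mul_zero, mul_zero]

theorem rightDixmierMap_eq_sum_range {a : A} {N : ℕ} (h : (δ ^ N) a = 0) :
    rightDixmierMap δ x a = ∑ i ∈ range N, (-1 : A) ^ i * ((δ ^ i) a * x i) :=
  finsum_eq_sum_range_of_eq_zero_of_le fun i hi => by
    rw [Module.End.pow_map_zero_of_le hi h, zero_mul, mul_zero]

variable (hx0 : x 0 = 1) (hiter : ∀ i j, x i * x j = (i + j).choose i • x (i + j))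

include hx0 hiter in
theorem finsum_mul_leftDixmierMap {a : A} {N : ℕ} (h : (δ ^ N) a = 0) :
    ∑ᶠ i, x i * leftDixmierMap δ x ((δ ^ i) a) = a := by
  have hterm : ∀ i j, x i * ((-1 : A) ^ j * (x j * (δ ^ j) ((δ ^ i) a)))
      = ((-1) ^ j * (i + j).choose i : ℤ) • (x (i + j) * (δ ^ (i + j)) a) := by
    intro i j
    rw [pow_apply_pow_apply, ← ((Commute.neg_one_left (x i)).pow_left j).left_comm,
      ← mul_assoc (x i), hiter, zsmul_eq_mul, nsmul_eq_mul]
    push_cast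
    simp only [mul_assoc]
  calc ∑ᶠ i, x i * leftDixmierMap δ x ((δ ^ i) a)
      = ∑ i ∈ range N, ∑ j ∈ range N,
          ((-1) ^ j * (i + j).choose i : ℤ) • (x (i + j) * (δ ^ (i + j)) a) := by
        rw [finsum_eq_sum_range_of_eq_zero_of_le (N := N) fun i hi => by
          rw [Module.End.pow_map_zero_of_le hi h,
            leftDixmierMap_eq_sum_range (N := 0) (map_zero _), sum_range_zero, mul_zero]]
        refine sum_congr rfl fun i _ => ?_
        rw [leftDixmierMap_eq_sum_range (pow_apply_pow_apply_eq_zero h i), mul_sum]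
        exact sum_congr rfl fun j _ => hterm i j
    _ = a := by
        refine (sum_range_sum_range_neg_one_pow_mul_choose_zsmul
          (c := fun n => x n * (δ ^ n) a) fun n hn => ?_).trans (by simp [hx0])
        rw [Module.End.pow_map_zero_of_le hn h, mul_zero]

include hx0 hiter in
theorem finsum_rightDixmierMap_mul {a : A} {N : ℕ} (h : (δ ^ N) a = 0) :
    ∑ᶠ i, rightDixmierMap δ x ((δ ^ i) a) * x i = a := by
  have hterm : ∀ i j, (-1 : A) ^ j * ((δ ^ j) ((δ ^ i) a) * x j) * x i
      = ((-1) ^ j * (i + j).choose i : ℤ) • ((δ ^ (i + j)) a * x (i + j)) := by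
    intro i j
    rw [pow_apply_pow_apply, mul_assoc, mul_assoc, hiter, add_comm j, Nat.choose_symm_add,
      zsmul_eq_mul, nsmul_eq_mul]
    push_cast
    rw [← (Nat.cast_commute _ ((δ ^ (i + j)) a)).left_comm, mul_assoc]
  calc ∑ᶠ i, rightDixmierMap δ x ((δ ^ i) a) * x i
      = ∑ i ∈ range N, ∑ j ∈ range N,
          ((-1) ^ j * (i + j).choose i : ℤ) • ((δ ^ (i + j)) a * x (i + j)) := by
        rw [finsum_eq_sum_range_of_eq_zero_of_le (N := N) fun i hi => by
          rw [Module.End.pow_map_zero_of_le hi h,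
            rightDixmierMap_eq_sum_range (N := 0) (map_zero _), sum_range_zero, zero_mul]]
        refine sum_congr rfl fun i _ => ?_
        rw [rightDixmierMap_eq_sum_range (pow_apply_pow_apply_eq_zero h i), sum_mul]
        exact sum_congr rfl fun j _ => hterm i j
    _ = a := by
        refine (sum_range_sum_range_neg_one_pow_mul_choose_zsmul
          (c := fun n => (δ ^ n) a * x n) fun n hn => ?_).trans (by simp [hx0])
        rw [Module.End.pow_map_zero_of_le hn h, zero_mul]

include hx0 in
theorem leftDixmierMap_of_map_eq_zero {c : A} (hc : δ c = 0) : leftDixmierMap δ x c = c := by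
  rw [leftDixmierMap_eq_sum_range (N := 1) (by rwa [pow_one])]
  simp [hx0]

variable (hcomm : ∀ i a, Commute (x i) a)

include hcomm in
theorem rightDixmierMap_eq_leftDixmierMap : rightDixmierMap δ x = leftDixmierMap δ x :=
  funext fun a => finsum_congr fun i => by rw [(hcomm i _).eq]

include hiter hcomm in
theorem leftDixmierMap_mul (hleib : ∀ a b, δ (a * b) = δ a * b + a * δ b)
    (hln : ∀ a : A, ∃ n, (δ ^ n) a = 0) (a b : A) :
    leftDixmierMap δ x (a * b) = leftDixmierMap δ x a * leftDixmierMap δ x b := by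
  obtain ⟨M, ha⟩ := hln a
  obtain ⟨N, hb⟩ := hln b
  have hterm : ∀ i j, (-1 : A) ^ i * (x i * (δ ^ i) a) * ((-1) ^ j * (x j * (δ ^ j) b))
      = (-1) ^ (i + j) * (x (i + j) * ((i + j).choose i • ((δ ^ i) a * (δ ^ j) b))) := by
    intro i j
    rw [mul_assoc, ← ((Commute.neg_one_left (x i * (δ ^ i) a)).pow_left j).left_comm,
      ← mul_assoc, ← pow_add, mul_assoc (x i), ← (hcomm j _).left_comm, ← mul_assoc (x i),
      hiter]
    simp only [smul_mul_assoc, mul_smul_comm]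
  have hvanish : ∀ i j, M + N ≤ i + j → (δ ^ i) a * (δ ^ j) b = 0 := by
    intro i j hij
    rcases le_or_gt M i with hM | hM
    · rw [Module.End.pow_map_zero_of_le hM ha, zero_mul]
    · rw [Module.End.pow_map_zero_of_le (by omega) hb, mul_zero]
  rw [leftDixmierMap_eq_sum_range (pow_add_apply_mul_eq_zero_of_leibniz hleib ha hb),
    leftDixmierMap_eq_sum_range (Module.End.pow_map_zero_of_le (M.le_add_right N) ha),
    leftDixmierMap_eq_sum_range (Module.End.pow_map_zero_of_le (N.le_add_left M) hb),
    sum_mul_sum, sum_range_sum_range_eq_sum_range_sum_antidiagonal _ _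
      fun i j hij => by rw [hterm, hvanish i j hij, smul_zero, mul_zero, mul_zero]]
  refine sum_congr rfl fun n _ => ?_
  rw [pow_apply_mul_of_leibniz hleib, mul_sum, mul_sum]
  refine sum_congr rfl fun p hp => ?_
  rw [hterm, mem_antidiagonal.1 hp]

end DixmierMap

theorem stmt_4_general {K A : Type*} [Field K] [Ring A] [Algebra K A]
    (δ : Module.End K A) (hleib : ∀ a b : A, δ (a * b) = δ a * b + a * δ b)
    (hln : ∀ a : A, ∃ n : ℕ, (δ ^ n) a = 0)
    (x : ℕ → A) (hx0 : x 0 = 1)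
    (hiter : ∀ i j : ℕ, x i * x j = ((i + j).choose i) • x (i + j))
    (φ ψ : A → A)
    (hφ : ∀ a : A, φ a = ∑ᶠ i : ℕ, (-1 : A) ^ i * (x i * (δ ^ i) a))
    (hψ : ∀ a : A, ψ a = ∑ᶠ i : ℕ, (-1 : A) ^ i * ((δ ^ i) a * x i)) :
    (∀ a : A, a = ∑ᶠ i : ℕ, x i * φ ((δ ^ i) a)) ∧
    (∀ a : A, a = ∑ᶠ i : ℕ, ψ ((δ ^ i) a) * x i) ∧
    ((∀ (i : ℕ) (a : A), Commute (x i) a) →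
      φ 1 = 1 ∧ ψ 1 = 1 ∧
      (∀ a b : A, φ (a * b) = φ a * φ b) ∧
      (∀ a b : A, ψ (a * b) = ψ a * ψ b) ∧
      (∀ a c : A, δ c = 0 → φ (c * a) = c * φ a ∧ φ (a * c) = φ a * c) ∧
      (∀ a c : A, δ c = 0 → ψ (c * a) = c * ψ a ∧ ψ (a * c) = ψ a * c)) := by
  obtain rfl : φ = leftDixmierMap δ x := funext hφ
  obtain rfl : ψ = rightDixmierMap δ x := funext hψ
  refine ⟨fun a => ?_, fun a => ?_, fun hcomm => ?_⟩
  · obtain ⟨N, hN⟩ := hln a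
    exact (finsum_mul_leftDixmierMap hx0 hiter hN).symm
  · obtain ⟨N, hN⟩ := hln a
    exact (finsum_rightDixmierMap_mul hx0 hiter hN).symm
  rw [rightDixmierMap_eq_leftDixmierMap hcomm]
  have hmul := leftDixmierMap_mul hiter hcomm hleib hln
  have hconst : ∀ c, δ c = 0 → leftDixmierMap δ x c = c :=
    fun c hc => leftDixmierMap_of_map_eq_zero hx0 hc
  have hone := hconst 1 (map_one_eq_zero_of_leibniz hleib)
  have hlinear : ∀ a c : A, δ c = 0 → leftDixmierMap δ x (c * a) = c * leftDixmierMap δ x a ∧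
      leftDixmierMap δ x (a * c) = leftDixmierMap δ x a * c :=
    fun a c hc => by rw [hmul, hmul, hconst c hc]; exact ⟨rfl, rfl⟩
  exact ⟨hone, hone, hmul, hmul, hlinear, hlinear⟩

/-- Let `δ` be a locally nilpotent `K`-derivation of `A` and `(x i)` an
infinite iterative `δ`-descent; let `φ a := ∑_{i≥0} (-1)^i (x i)·δ^i a` and
`ψ a := ∑_{i≥0} (-1)^i (δ^i a)·(x i)`.  Then every `a ∈ A` satisfies the Taylor-type
expansions `a = ∑_{i≥0} (x i)·φ(δ^i a) = ∑_{i≥0} ψ(δ^i a)·(x i)` (finite sums).  If, in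
addition, all `x i` are central in `A`, then `φ` and `ψ` are `A^δ`-algebra homomorphisms
(in particular unital and multiplicative). -/
theorem stmt_4 {K A : Type*} [Field K] [Ring A] [Algebra K A]
    (δ : Module.End K A) (hleib : ∀ a b : A, δ (a * b) = δ a * b + a * δ b)
    (hln : ∀ a : A, ∃ n : ℕ, (δ ^ n) a = 0)
    (x : ℕ → A) (hx0 : x 0 = 1) (hx : ∀ i : ℕ, δ (x (i + 1)) = x i)
    (hiter : ∀ i j : ℕ, x i * x j = ((i + j).choose i) • x (i + j))
    (φ ψ : A → A)
    (hφ : ∀ a : A, φ a = ∑ᶠ i : ℕ, (-1 : A) ^ i * (x i * (δ ^ i) a))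
    (hψ : ∀ a : A, ψ a = ∑ᶠ i : ℕ, (-1 : A) ^ i * ((δ ^ i) a * x i)) :
    (∀ a : A, a = ∑ᶠ i : ℕ, x i * φ ((δ ^ i) a)) ∧
    (∀ a : A, a = ∑ᶠ i : ℕ, ψ ((δ ^ i) a) * x i) ∧
    ((∀ (i : ℕ) (a : A), Commute (x i) a) →
      φ 1 = 1 ∧ ψ 1 = 1 ∧
      (∀ a b : A, φ (a * b) = φ a * φ b) ∧
      (∀ a b : A, ψ (a * b) = ψ a * ψ b) ∧
      (∀ a c : A, δ c = 0 → φ (c * a) = c * φ a ∧ φ (a * c) = φ a * c) ∧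
      (∀ a c : A, δ c = 0 → ψ (c * a) = c * ψ a ∧ ψ (a * c) = ψ a * c)) :=
  stmt_4_general δ hleib hln x hx0 hiter φ ψ hφ hψ
end

section
/- Let δ be a K-derivation of A with δ^l = 0 for some l ≥ 2, and let (x^[i])_{0≤i≤l-1} be an iterative δ-descent of length l. Define φ(a) := Σ_{i=0}^{l-1} (-1)^i x^[i]·δ^i(a) and ψ(a) := Σ_{i=0}^{l-1} (-1)^i δ^i(a)·x^[i]. Then: φ is right A^δ-linear and ψ is left A^δ-linear; both are projections onto A^δ (im(φ)=im(ψ)=A^δ and φ(y)=ψ(y)=y for y ∈ A^δ); φ(x^[i]) = ψ(x^[i]) = 0 for 1 ≤ i ≤ l-1; every a ∈ A satisfies a = Σ_{i=0}^{l-1} x^[i]·φ(δ^i(a)) = Σ_{i=0}^{l-1} ψ(δ^i(a))·x^[i]; and if all x^[i] are central and x^[i]·x^[j] ∈ A_+ := ⊕_{i=1}^{l-1} x^[i]·A^δ whenever i+j ≥ l, then φ and ψ are A^δ-algebra homomorphisms. -/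
/-!
The sum `φ a = ∑ (-1)^i x^[i] δ^i a` is constant because `δ` of its `i`-th term is
`u i - u (i+1)` with `u i = (-1)^i δ(x^[i]) δ^i a`, and `u 0 = u l = 0`. It kills `x^[n]` for
`n ≥ 1` because `x^[i] δ^i x^[n] = C(n,i) x^[n]` and `∑ (-1)^i C(n,i) = 0`. The Taylor formula
`a = ∑ x^[i] φ(δ^i a)` follows by induction on the least `n` with `δ^n a = 0`: the difference of
the two sides is a constant, and `φ` kills it. For multiplicativity, expand `a` and `b` by the
Taylor formula: `φ (x^[i] x^[j] c) = 0` for constant `c` unless `i = j = 0`. Every statement about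
`ψ` is the corresponding statement about `φ` in the opposite algebra `Aᵐᵒᵖ`.
-/

open LinearMap Finset MulOpposite

theorem Module.End.pow_succ_apply {R M : Type*} [Semiring R] [AddCommMonoid M] [Module R M]
    (f : Module.End R M) (n : ℕ) (m : M) : (f ^ (n + 1)) m = (f ^ n) (f m) := by
  rw [pow_succ, Module.End.mul_apply]

section IterativeDescent

variable {K A : Type*} [CommSemiring K] [Ring A] [Algebra K A]

def IsLeibniz (δ : Module.End K A) : Prop :=
  ∀ a b : A, δ (a * b) = δ a * b + a * δ b

structure IsIterativeDescent (δ : Module.End K A) (l : ℕ) (x : ℕ → A) : Prop where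
  zero : x 0 = 1
  map_succ : ∀ i, i + 1 < l → δ (x (i + 1)) = x i
  mul : ∀ i j, i + j < l → x i * x j = (i + j).choose i • x (i + j)

-- The paper's `φ`.
def descentProj (δ : Module.End K A) (l : ℕ) (x : ℕ → A) : Module.End K A :=
  ∑ i ∈ range l, (-1 : ℤ) ^ i • (mulLeft K (x i) * δ ^ i)

theorem descentProj_apply (δ : Module.End K A) (l : ℕ) (x : ℕ → A) (a : A) :
    descentProj δ l x a = ∑ i ∈ range l, (-1 : ℤ) ^ i • (x i * (δ ^ i) a) := by
  simp only [descentProj, LinearMap.sum_apply, LinearMap.smul_apply, Module.End.mul_apply,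
    mulLeft_apply]

variable {δ : Module.End K A} {l : ℕ} {x : ℕ → A}

namespace IsLeibniz

theorem map_one (hδ : IsLeibniz δ) : δ 1 = 0 := by
  simpa using hδ 1 1

theorem map_mul_of_map_eq_zero (hδ : IsLeibniz δ) {c : A} (hc : δ c = 0) (a : A) :
    δ (a * c) = δ a * c := by
  rw [hδ, hc, mul_zero, add_zero]

theorem pow_apply_mul_of_map_eq_zero (hδ : IsLeibniz δ) {c : A} (hc : δ c = 0) (n : ℕ)
    (a : A) : (δ ^ n) (a * c) = (δ ^ n) a * c := by
  induction n generalizing a with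
  | zero => rfl
  | succ n ih => rw [Module.End.pow_succ_apply, hδ.map_mul_of_map_eq_zero hc, ih,
      Module.End.pow_succ_apply]

theorem map_mul_eq_zero (hδ : IsLeibniz δ) {a b : A} (ha : δ a = 0) (hb : δ b = 0) :
    δ (a * b) = 0 := by
  rw [hδ.map_mul_of_map_eq_zero hb, ha, zero_mul]

end IsLeibniz

theorem descentProj_mul_of_map_eq_zero (hδ : IsLeibniz δ) {c : A} (hc : δ c = 0) (a : A) :
    descentProj δ l x (a * c) = descentProj δ l x a * c := by
  simp only [descentProj_apply, hδ.pow_apply_mul_of_map_eq_zero hc, sum_mul, smul_mul_assoc,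
    mul_assoc]

namespace IsIterativeDescent

theorem pow_apply_x_of_le (hx : IsIterativeDescent δ l x) {k m : ℕ} (hkm : k ≤ m)
    (hm : m < l) : (δ ^ k) (x m) = x (m - k) := by
  induction k with
  | zero => rfl
  | succ k ih =>
    rw [pow_succ', Module.End.mul_apply, ih (by omega), show m - k = m - (k + 1) + 1 by omega,
      hx.map_succ _ (by omega)]

theorem pow_apply_x_of_lt (hδ : IsLeibniz δ) (hx : IsIterativeDescent δ l x) {k m : ℕ}
    (hmk : m < k) (hm : m < l) : (δ ^ k) (x m) = 0 := by
  refine Module.End.pow_map_zero_of_le hmk ?_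
  rw [pow_succ', Module.End.mul_apply, hx.pow_apply_x_of_le le_rfl hm, Nat.sub_self, hx.zero,
    hδ.map_one]

theorem map_descentProj (hδ : IsLeibniz δ) (hx : IsIterativeDescent δ l x) (hnil : δ ^ l = 0)
    (a : A) : δ (descentProj δ l x a) = 0 := by
  set u : ℕ → A := fun i ↦ (-1 : ℤ) ^ i • (δ (x i) * (δ ^ i) a)
  have hterm : ∀ i ∈ range l, δ ((-1 : ℤ) ^ i • (x i * (δ ^ i) a)) = u i - u (i + 1) := by
    intro i hi
    rw [mem_range] at hi
    have hlast : (-1 : ℤ) ^ i • (x i * (δ ^ (i + 1)) a) = - u (i + 1) := by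
      rcases Nat.lt_or_ge (i + 1) l with h | h
      · simp [u, hx.map_succ i h, pow_succ]
      · have : (δ ^ (i + 1)) a = 0 := by rw [show i + 1 = l by omega, hnil]; rfl
        simp [u, this]
    rw [map_zsmul, hδ, smul_add, ← Module.End.mul_apply, ← pow_succ', hlast, sub_eq_add_neg]
  have hu0 : u 0 = 0 := by simp [u, hx.zero, hδ.map_one]
  have hul : u l = 0 := by simp [u, hnil]
  rw [descentProj_apply, map_sum, sum_congr rfl hterm, sum_range_sub', hu0, hul, sub_zero]

theorem descentProj_of_map_eq_zero (hx : IsIterativeDescent δ l x) (hl : 0 < l) {y : A}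
    (hy : δ y = 0) : descentProj δ l x y = y := by
  rw [descentProj_apply, sum_eq_single_of_mem 0 (mem_range.mpr hl)]
  · simp [hx.zero]
  · intro i _ hi
    rw [Module.End.pow_map_zero_of_le (Nat.one_le_iff_ne_zero.mpr hi) (by simpa using hy),
      mul_zero, smul_zero]

theorem descentProj_x (hδ : IsLeibniz δ) (hx : IsIterativeDescent δ l x) {n : ℕ}
    (hn0 : n ≠ 0) (hn : n < l) : descentProj δ l x (x n) = 0 := by
  rw [descentProj_apply, ← sum_subset (range_subset_range.mpr hn) fun i _ hi ↦ by
    rw [hx.pow_apply_x_of_lt hδ (by simpa using hi) hn, mul_zero, smul_zero]]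
  have hterm : ∀ i ∈ Finset.range (n + 1),
      (-1 : ℤ) ^ i • (x i * (δ ^ i) (x n)) = ((-1 : ℤ) ^ i * n.choose i) • x n := by
    intro i hi
    have hin : i ≤ n := Nat.lt_succ_iff.mp (mem_range.mp hi)
    rw [hx.pow_apply_x_of_le hin hn, hx.mul _ _ (by omega), Nat.add_sub_cancel' hin, mul_zsmul,
      natCast_zsmul]
  rw [sum_congr rfl hterm, ← sum_smul, Int.alternating_sum_range_choose_of_ne hn0, zero_smul]

theorem descentProj_x_mul (hδ : IsLeibniz δ) (hx : IsIterativeDescent δ l x) {n : ℕ}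
    (hn0 : n ≠ 0) (hn : n < l) {c : A} (hc : δ c = 0) : descentProj δ l x (x n * c) = 0 := by
  rw [descentProj_mul_of_map_eq_zero hδ hc, hx.descentProj_x hδ hn0 hn, zero_mul]

theorem map_sum_x_mul_descentProj (hδ : IsLeibniz δ) (hx : IsIterativeDescent δ l x)
    (hnil : δ ^ l = 0) (a : A) :
    δ (∑ i ∈ range l, x i * descentProj δ l x ((δ ^ i) a)) =
      ∑ i ∈ range l, x i * descentProj δ l x ((δ ^ i) (δ a)) := by
  obtain _ | m := l
  · simp
  have hlast : (δ ^ m) (δ a) = 0 := by rw [← Module.End.pow_succ_apply, hnil]; rfl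
  simp only [map_sum, hδ.map_mul_of_map_eq_zero (hx.map_descentProj hδ hnil _)]
  rw [sum_range_succ', sum_range_succ, hlast, map_zero, mul_zero, add_zero, hx.zero,
    hδ.map_one, zero_mul, add_zero]
  refine sum_congr rfl fun i hi ↦ ?_
  rw [hx.map_succ i (by simpa using hi), Module.End.pow_succ_apply]

theorem descentProj_sum_x_mul_descentProj (hδ : IsLeibniz δ) (hx : IsIterativeDescent δ l x)
    (hnil : δ ^ l = 0) (hl : 0 < l) (a : A) :
    descentProj δ l x (∑ i ∈ range l, x i * descentProj δ l x ((δ ^ i) a)) =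
      descentProj δ l x a := by
  rw [map_sum, sum_eq_single_of_mem 0 (mem_range.mpr hl)]
  · rw [hx.zero, one_mul, pow_zero, Module.End.one_apply,
      hx.descentProj_of_map_eq_zero hl (hx.map_descentProj hδ hnil a)]
  · intro i hi hi0
    exact hx.descentProj_x_mul hδ hi0 (by simpa using hi) (hx.map_descentProj hδ hnil _)

theorem sum_x_mul_descentProj (hδ : IsLeibniz δ) (hx : IsIterativeDescent δ l x)
    (hnil : δ ^ l = 0) (hl : 0 < l) (a : A) :
    ∑ i ∈ range l, x i * descentProj δ l x ((δ ^ i) a) = a := by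
  suffices ∀ n (b : A), (δ ^ n) b = 0 → ∑ i ∈ range l, x i * descentProj δ l x ((δ ^ i) b) = b
    from this l a (by rw [hnil]; rfl)
  intro n
  induction n with
  | zero => rintro a rfl; simp
  | succ n ih =>
    intro a ha
    set G := ∑ i ∈ range l, x i * descentProj δ l x ((δ ^ i) a)
    have hconst : δ (a - G) = 0 := by
      rw [map_sub, hx.map_sum_x_mul_descentProj hδ hnil,
        ih _ (by rwa [← Module.End.pow_succ_apply]), sub_self]
    refine (sub_eq_zero.mp ?_).symm
    rw [← hx.descentProj_of_map_eq_zero hl hconst, map_sub,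
      hx.descentProj_sum_x_mul_descentProj hδ hnil hl, sub_self]

theorem descentProj_x_mul_x (hδ : IsLeibniz δ) (hx : IsIterativeDescent δ l x)
    (hplus : ∀ i j, i < l → j < l → l ≤ i + j → descentProj δ l x (x i * x j) = 0)
    {i j : ℕ} (hi : i < l) (hj : j < l) (hij : i + j ≠ 0) : descentProj δ l x (x i * x j) = 0 := by
  rcases Nat.lt_or_ge (i + j) l with h | h
  · rw [hx.mul i j h, map_nsmul, hx.descentProj_x hδ hij h, smul_zero]
  · exact hplus i j hi hj h

theorem descentProj_mul (hδ : IsLeibniz δ) (hx : IsIterativeDescent δ l x) (hnil : δ ^ l = 0)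
    (hl : 0 < l) (hcomm : ∀ i a, Commute (x i) a)
    (hplus : ∀ i j, i < l → j < l → l ≤ i + j → descentProj δ l x (x i * x j) = 0) (a b : A) :
    descentProj δ l x (a * b) = descentProj δ l x a * descentProj δ l x b := by
  set φ := descentProj δ l x
  have hconst : ∀ i j, δ (φ ((δ ^ i) a) * φ ((δ ^ j) b)) = 0 := fun i j ↦
    hδ.map_mul_eq_zero (hx.map_descentProj hδ hnil _) (hx.map_descentProj hδ hnil _)
  have hexpand : a * b = ∑ i ∈ range l, ∑ j ∈ range l,
      x i * x j * (φ ((δ ^ i) a) * φ ((δ ^ j) b)) := by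
    conv_lhs =>
      rw [← hx.sum_x_mul_descentProj hδ hnil hl a, ← hx.sum_x_mul_descentProj hδ hnil hl b]
    rw [sum_mul_sum]
    refine sum_congr rfl fun i _ ↦ sum_congr rfl fun j _ ↦ ?_
    rw [mul_assoc, mul_assoc, ← mul_assoc (φ _), ← (hcomm j _).eq, mul_assoc]
  have h0 : 0 ∈ range l := mem_range.mpr hl
  rw [hexpand, map_sum, sum_eq_single_of_mem 0 h0, map_sum, sum_eq_single_of_mem 0 h0]
  · rw [descentProj_mul_of_map_eq_zero hδ (hconst 0 0), hx.zero, one_mul,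
      hx.descentProj_of_map_eq_zero hl hδ.map_one, one_mul, pow_zero, Module.End.one_apply,
      Module.End.one_apply]
  · intro j hj hj0
    rw [descentProj_mul_of_map_eq_zero hδ (hconst 0 j),
      hx.descentProj_x_mul_x hδ hplus hl (by simpa using hj) (by omega), zero_mul]
  · intro i hi hi0
    rw [map_sum]
    refine sum_eq_zero fun j hj ↦ ?_
    rw [descentProj_mul_of_map_eq_zero hδ (hconst i j),
      hx.descentProj_x_mul_x hδ hplus (by simpa using hi) (by simpa using hj) (by omega), zero_mul]

end IsIterativeDescent

theorem iSup_map_mulLeft_le_ker {f : Module.End K A}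
    (hf : ∀ i ∈ Finset.Ico 1 l, ∀ c, δ c = 0 → f (x i * c) = 0) :
    ⨆ i ∈ Finset.Ico 1 l, (ker δ).map (mulLeft K (x i)) ≤ ker f :=
  iSup₂_le fun i hi ↦ by
    rintro _ ⟨c, hc, rfl⟩
    exact hf i hi c hc

def opEnd (δ : Module.End K A) : Module.End K Aᵐᵒᵖ :=
  (opLinearEquiv K).toLinearMap ∘ₗ δ ∘ₗ (opLinearEquiv K).symm.toLinearMap

@[simp]
theorem opEnd_apply (a : Aᵐᵒᵖ) : opEnd δ a = op (δ (unop a)) := rfl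

@[simp]
theorem opEnd_pow_apply (n : ℕ) (a : Aᵐᵒᵖ) : (opEnd δ ^ n) a = op ((δ ^ n) (unop a)) := by
  induction n generalizing a with
  | zero => rfl
  | succ n ih => simp [Module.End.pow_succ_apply, ih]

theorem opEnd_pow_eq_zero (hnil : δ ^ l = 0) : opEnd δ ^ l = 0 := by
  ext a
  simp [hnil]

theorem IsLeibniz.op (hδ : IsLeibniz δ) : IsLeibniz (opEnd δ) := fun a b ↦ by
  simp [hδ (unop b), add_comm]

theorem IsIterativeDescent.op (hx : IsIterativeDescent δ l x) :
    IsIterativeDescent (opEnd δ) l (op ∘ x) where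
  zero := by simp [hx.zero]
  map_succ i hi := by simp [hx.map_succ i hi]
  mul i j hij := by
    simp only [Function.comp_apply, ← op_mul, hx.mul j i (by omega), add_comm j i]
    rw [← Nat.choose_symm_add, op_smul]

-- The paper's `ψ`.
def descentProjRight (δ : Module.End K A) (l : ℕ) (x : ℕ → A) : Module.End K A :=
  ∑ i ∈ range l, (-1 : ℤ) ^ i • (mulRight K (x i) * δ ^ i)

theorem descentProjRight_apply (δ : Module.End K A) (l : ℕ) (x : ℕ → A) (a : A) :
    descentProjRight δ l x a = ∑ i ∈ range l, (-1 : ℤ) ^ i • ((δ ^ i) a * x i) := by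
  simp only [descentProjRight, LinearMap.sum_apply, LinearMap.smul_apply, Module.End.mul_apply,
    mulRight_apply]

theorem op_descentProjRight (a : A) :
    op (descentProjRight δ l x a) = descentProj (opEnd δ) l (op ∘ x) (op a) := by
  simp only [descentProjRight_apply, descentProj_apply, op_sum, op_smul, op_mul, opEnd_pow_apply,
    unop_op, Function.comp_apply]

theorem descentProjRight_mul_of_map_eq_zero (hδ : IsLeibniz δ) {c : A} (hc : δ c = 0) (a : A) :
    descentProjRight δ l x (c * a) = c * descentProjRight δ l x a :=
  op_injective <| by
    rw [op_mul, op_descentProjRight, op_mul, descentProj_mul_of_map_eq_zero hδ.op (by simp [hc]),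
      op_descentProjRight]

namespace IsIterativeDescent

theorem map_descentProjRight (hδ : IsLeibniz δ) (hx : IsIterativeDescent δ l x)
    (hnil : δ ^ l = 0) (a : A) : δ (descentProjRight δ l x a) = 0 := by
  have := hx.op.map_descentProj hδ.op (opEnd_pow_eq_zero hnil) (MulOpposite.op a)
  rwa [← op_descentProjRight, opEnd_apply, unop_op, op_eq_zero_iff] at this

theorem descentProjRight_of_map_eq_zero (hx : IsIterativeDescent δ l x) (hl : 0 < l) {y : A}
    (hy : δ y = 0) : descentProjRight δ l x y = y :=
  op_injective <| by
    rw [op_descentProjRight, hx.op.descentProj_of_map_eq_zero hl (by simp [hy])]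

theorem descentProjRight_x (hδ : IsLeibniz δ) (hx : IsIterativeDescent δ l x) {n : ℕ}
    (hn0 : n ≠ 0) (hn : n < l) : descentProjRight δ l x (x n) = 0 :=
  op_injective <| by
    rw [op_descentProjRight, op_zero]
    exact hx.op.descentProj_x hδ.op hn0 hn

theorem sum_descentProjRight_mul_x (hδ : IsLeibniz δ) (hx : IsIterativeDescent δ l x)
    (hnil : δ ^ l = 0) (hl : 0 < l) (a : A) :
    ∑ i ∈ range l, descentProjRight δ l x ((δ ^ i) a) * x i = a :=
  op_injective <| by
    conv_rhs => rw [← hx.op.sum_x_mul_descentProj hδ.op (opEnd_pow_eq_zero hnil) hl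
      (MulOpposite.op a)]
    simp [op_descentProjRight]

theorem descentProjRight_mul (hδ : IsLeibniz δ) (hx : IsIterativeDescent δ l x)
    (hnil : δ ^ l = 0) (hl : 0 < l) (hcomm : ∀ i a, Commute (x i) a)
    (hplus : ∀ i j, i < l → j < l → l ≤ i + j → descentProjRight δ l x (x i * x j) = 0)
    (a b : A) :
    descentProjRight δ l x (a * b) = descentProjRight δ l x a * descentProjRight δ l x b :=
  op_injective <| by
    have hplus' (i j : ℕ) (hi : i < l) (hj : j < l) (hij : l ≤ i + j) :
        descentProj (opEnd δ) l (MulOpposite.op ∘ x) (MulOpposite.op (x i) * MulOpposite.op (x j))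
          = 0 := by
      rw [← op_mul, ← op_descentProjRight, hplus j i hj hi (by omega), op_zero]
    rw [op_mul, op_descentProjRight, op_descentProjRight, op_descentProjRight, op_mul]
    exact hx.op.descentProj_mul hδ.op (opEnd_pow_eq_zero hnil) hl
      (fun i a ↦ (hcomm i (unop a)).op) hplus' _ _

end IsIterativeDescent

end IterativeDescent

/-- Let `δ` be a `K`-derivation of `A` with `δ^l = 0`, `l ≥ 2`, and let
`(x i)_{0 ≤ i ≤ l-1}` be an iterative `δ`-descent of length `l`.  Define
`φ a := ∑_{i=0}^{l-1} (-1)^i (x i)·δ^i a`, `ψ a := ∑_{i=0}^{l-1} (-1)^i (δ^i a)·(x i)`.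
Then `φ` is right `A^δ`-linear, `ψ` is left `A^δ`-linear, both are projections onto `A^δ`,
`φ (x i) = ψ (x i) = 0` for `1 ≤ i ≤ l-1`, every `a ∈ A` satisfies
`a = ∑_{i=0}^{l-1} (x i)·φ(δ^i a) = ∑_{i=0}^{l-1} ψ(δ^i a)·(x i)`, and if all `x i` are
central with `x i * x j ∈ A_+ := ⊕_{i=1}^{l-1} (x i)·A^δ` whenever `i + j ≥ l`, then `φ` and
`ψ` are `A^δ`-algebra homomorphisms. -/
theorem stmt_5 {K A : Type*} [Field K] [Ring A] [Algebra K A]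
    (δ : Module.End K A) (hleib : ∀ a b : A, δ (a * b) = δ a * b + a * δ b)
    (l : ℕ) (hl : 2 ≤ l) (hnil : δ ^ l = 0)
    (x : ℕ → A) (hx0 : x 0 = 1) (hx : ∀ i : ℕ, i + 1 < l → δ (x (i + 1)) = x i)
    (hiter : ∀ i j : ℕ, i + j < l → x i * x j = ((i + j).choose i) • x (i + j))
    (φ ψ : A → A)
    (hφ : ∀ a : A, φ a = ∑ i ∈ Finset.range l, (-1 : A) ^ i * (x i * (δ ^ i) a))
    (hψ : ∀ a : A, ψ a = ∑ i ∈ Finset.range l, (-1 : A) ^ i * ((δ ^ i) a * x i)) :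
    (∀ a b : A, φ (a + b) = φ a + φ b) ∧ (∀ (k : K) (a : A), φ (k • a) = k • φ a) ∧
    (∀ a b : A, ψ (a + b) = ψ a + ψ b) ∧ (∀ (k : K) (a : A), ψ (k • a) = k • ψ a) ∧
    (∀ a c : A, δ c = 0 → φ (a * c) = φ a * c) ∧
    (∀ a c : A, δ c = 0 → ψ (c * a) = c * ψ a) ∧
    (∀ a : A, δ (φ a) = 0) ∧ (∀ a : A, δ (ψ a) = 0) ∧
    (∀ y : A, δ y = 0 → φ y = y ∧ ψ y = y) ∧
    (∀ i : ℕ, 1 ≤ i → i < l → φ (x i) = 0 ∧ ψ (x i) = 0) ∧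
    (∀ a : A, a = ∑ i ∈ Finset.range l, x i * φ ((δ ^ i) a)) ∧
    (∀ a : A, a = ∑ i ∈ Finset.range l, ψ ((δ ^ i) a) * x i) ∧
    ((∀ (i : ℕ) (a : A), Commute (x i) a) →
      (∀ i j : ℕ, i < l → j < l → l ≤ i + j →
        x i * x j ∈ ⨆ i ∈ Finset.Ico 1 l, (ker δ).map (mulLeft K (x i))) →
      φ 1 = 1 ∧ ψ 1 = 1 ∧
      (∀ a b : A, φ (a * b) = φ a * φ b) ∧
      (∀ a b : A, ψ (a * b) = ψ a * ψ b)) := by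
  have hδ : IsLeibniz δ := hleib
  have hdesc : IsIterativeDescent δ l x := ⟨hx0, hx, hiter⟩
  have hl0 : 0 < l := by omega
  obtain rfl : φ = descentProj δ l x :=
    funext fun a ↦ by simp [hφ, descentProj_apply, zsmul_eq_mul]
  obtain rfl : ψ = descentProjRight δ l x :=
    funext fun a ↦ by simp [hψ, descentProjRight_apply, zsmul_eq_mul]
  refine ⟨map_add _, map_smul _, map_add _, map_smul _,
    fun a c hc ↦ descentProj_mul_of_map_eq_zero hδ hc a,
    fun a c hc ↦ descentProjRight_mul_of_map_eq_zero hδ hc a,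
    hdesc.map_descentProj hδ hnil, hdesc.map_descentProjRight hδ hnil,
    fun y hy ↦ ⟨hdesc.descentProj_of_map_eq_zero hl0 hy,
      hdesc.descentProjRight_of_map_eq_zero hl0 hy⟩,
    fun i hi hil ↦ ⟨hdesc.descentProj_x hδ (by omega) hil,
      hdesc.descentProjRight_x hδ (by omega) hil⟩,
    fun a ↦ (hdesc.sum_x_mul_descentProj hδ hnil hl0 a).symm,
    fun a ↦ (hdesc.sum_descentProjRight_mul_x hδ hnil hl0 a).symm, fun hcomm hplus ↦ ?_⟩
  refine ⟨hdesc.descentProj_of_map_eq_zero hl0 hδ.map_one,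
    hdesc.descentProjRight_of_map_eq_zero hl0 hδ.map_one,
    hdesc.descentProj_mul hδ hnil hl0 hcomm fun i j hi hj hij ↦
      iSup_map_mulLeft_le_ker (fun k hk c hc ↦ ?_) (hplus i j hi hj hij),
    hdesc.descentProjRight_mul hδ hnil hl0 hcomm fun i j hi hj hij ↦
      iSup_map_mulLeft_le_ker (fun k hk c hc ↦ ?_) (hplus i j hi hj hij)⟩ <;>
    obtain ⟨hk1, hkl⟩ := mem_Ico.mp hk
  · exact hdesc.descentProj_x_mul hδ (by omega) hkl hc
  · rw [(hcomm k c).eq, descentProjRight_mul_of_map_eq_zero hδ hc,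
      hdesc.descentProjRight_x hδ (by omega) hkl, mul_zero]
end

section
/- Suppose K has characteristic p > 0, δ is a K-derivation of A with δ^p = 0, and δ(x) = 1 for some x ∈ A. Then A = ⊕_{i=0}^{p-1} A^δ·x^i = ⊕_{i=0}^{p-1} x^i·A^δ as internal direct sums of K-subspaces, with ker δ^{n+1} = ⊕_{i=0}^{n} A^δ·x^i = ⊕_{i=0}^{n} x^i·A^δ for 0 ≤ n ≤ p-1; moreover [x, A^δ] ⊆ A^δ, so ad(x) restricts to a derivation of A^δ. -/
/-!
For a constant `c` and `δ x = 1` one has `δ^k (c x^n) = n (n-1) ⋯ (n-k+1) • c x^(n-k)`. Hence `δ^n`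
kills `A^δ x^i` for `i < n` and acts on `A^δ x^n` as multiplication by `n!`, a unit for `n < p`.
This triangularity gives the independence of the `A^δ x^i`, and subtracting `c x^n` with
`c = (n!)⁻¹ δ^n b` lowers the nilpotency order of `b`, which gives
`ker δ^(n+1) = ⊕_{i ≤ n} A^δ x^i` by induction; `δ^p = 0` turns the last one into `A`.
The same computation works for `x^n c`.
-/

open LinearMap

open scoped Nat

theorem biSup_range_eq_iSup_fin {α : Type*} [CompleteLattice α] (n : ℕ) (f : ℕ → α) :
    ⨆ i ∈ Finset.range n, f i = ⨆ i : Fin n, f i := by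
  simp only [Finset.mem_range, iSup_subtype']
  exact (Fin.equivSubtype.iSup_comp (g := fun i : {i // i < n} => f i)).symm

theorem iSupIndep_of_le_ker_of_disjoint_ker {ι R M N : Type*} [LinearOrder ι] [Ring R]
    [AddCommGroup M] [Module R M] [AddCommGroup N] [Module R N] {t : ι → Submodule R M}
    (f : ι → M →ₗ[R] N) (hlt : ∀ i j, i < j → t i ≤ ker (f j))
    (hdisj : ∀ j, Disjoint (t j) (ker (f j))) : iSupIndep t := by
  classical
  rw [iSupIndep_iff_finsetSum_eq_zero_imp_eq_zero]
  intro s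
  induction s using Finset.induction_on_max with
  | empty => simp
  | insert a s has ih =>
    intro v hv hsum
    have has' : a ∉ s := fun h => lt_irrefl a (has a h)
    rw [Finset.sum_insert has'] at hsum
    have hva : v a = 0 := by
      refine Submodule.disjoint_def.mp (hdisj a) _ (hv a (Finset.mem_insert_self a s)) ?_
      have hfs : ∑ i ∈ s, f a (v i) = 0 :=
        Finset.sum_eq_zero fun i hi => hlt i a (has i hi) (hv i (Finset.mem_insert_of_mem hi))
      simpa [map_sum, hfs] using congrArg (f a) hsum
    rw [hva, zero_add] at hsum
    intro i hi
    rcases Finset.mem_insert.mp hi with rfl | hi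
    exacts [hva, ih v (fun i hi => hv i (Finset.mem_insert_of_mem hi)) hsum i hi]

namespace Module.End

variable {K M : Type*} [CommRing K] [AddCommGroup M] [Module K M]

/-- `g n` plays the role of multiplication by `x ^ n`, for an element `x` with `δ x = 1`. -/
structure IsMonomialFamily (δ : Module.End K M) (g : ℕ → M →ₗ[K] M) : Prop where
  zero_apply : ∀ c ∈ ker δ, g 0 c = c
  apply_succ : ∀ n, ∀ c ∈ ker δ, δ (g (n + 1) c) = (n + 1) • g n c

namespace IsMonomialFamily

variable {δ : Module.End K M} {g : ℕ → M →ₗ[K] M} (h : IsMonomialFamily δ g)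
include h

theorem pow_apply {c : M} (hc : c ∈ ker δ) (k n : ℕ) :
    (δ ^ k) (g n c) = n.descFactorial k • g (n - k) c := by
  induction k generalizing n with
  | zero => simp
  | succ k ih =>
    rw [pow_succ', mul_apply, ih, map_nsmul, Nat.descFactorial_succ]
    rcases hnk : n - k with _ | m
    · rw [h.zero_apply c hc, mem_ker.mp hc, zero_mul, zero_smul, smul_zero]
    · rw [h.apply_succ m c hc, smul_smul, show n - (k + 1) = m by omega, Nat.mul_comm]

theorem pow_apply_self {c : M} (hc : c ∈ ker δ) (n : ℕ) : (δ ^ n) (g n c) = n ! • c := by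
  rw [h.pow_apply hc, Nat.descFactorial_self, Nat.sub_self, h.zero_apply c hc]

theorem map_le_ker_pow {i n : ℕ} (hin : i < n) : (ker δ).map (g i) ≤ ker (δ ^ n) := by
  rintro _ ⟨c, hc, rfl⟩
  rw [mem_ker, h.pow_apply hc, Nat.descFactorial_eq_zero_iff_lt.mpr hin, zero_smul]

theorem disjoint_map_ker_pow {n : ℕ} (hn : IsUnit (n ! : K)) :
    Disjoint ((ker δ).map (g n)) (ker (δ ^ n)) := by
  rw [Submodule.disjoint_def]
  rintro _ ⟨c, hc, rfl⟩ hker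
  rw [mem_ker, h.pow_apply_self hc, ← Nat.cast_smul_eq_nsmul K, hn.smul_eq_zero] at hker
  rw [hker, map_zero]

theorem ker_pow_le_iSup {n : ℕ} (hn : ∀ m < n, IsUnit (m ! : K)) :
    ker (δ ^ n) ≤ ⨆ i ∈ Finset.range n, (ker δ).map (g i) := by
  induction n with
  | zero => simp [Module.End.one_eq_id]
  | succ n ih =>
    intro b hb
    obtain ⟨u, hu⟩ := hn n n.lt_succ_self
    set c := (↑u⁻¹ : K) • (δ ^ n) b with hc_def
    have hc : c ∈ ker δ := by
      rw [mem_ker, hc_def, map_smul, ← mul_apply, ← pow_succ', mem_ker.mp hb, smul_zero]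
    have hgc : (δ ^ n) (g n c) = (δ ^ n) b := by
      rw [h.pow_apply_self hc, ← Nat.cast_smul_eq_nsmul K, ← hu, hc_def, smul_smul,
        Units.mul_inv, one_smul]
    have hrest : b - g n c ∈ ker (δ ^ n) := by rw [mem_ker, map_sub, hgc, sub_self]
    have hmono : (⨆ i ∈ Finset.range n, (ker δ).map (g i)) ≤ ⨆ i ∈ Finset.range (n + 1), (ker δ).map (g i) :=
      biSup_mono fun i hi => Finset.range_subset_range.mpr n.le_succ hi
    have htop : g n c ∈ ⨆ i ∈ Finset.range (n + 1), (ker δ).map (g i) :=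
      Submodule.mem_iSup_of_mem n <| Submodule.mem_iSup_of_mem (Finset.self_mem_range_succ n) ⟨c, hc, rfl⟩
    simpa using add_mem (hmono (ih (fun m hm => hn m (by omega)) hrest)) htop

theorem ker_pow_eq_iSup {n : ℕ} (hn : ∀ m < n, IsUnit (m ! : K)) :
    ker (δ ^ n) = ⨆ i ∈ Finset.range n, (ker δ).map (g i) :=
  (h.ker_pow_le_iSup hn).antisymm <| iSup₂_le fun _ hi => h.map_le_ker_pow (Finset.mem_range.mp hi)

theorem iSupIndep_map {n : ℕ} (hn : ∀ m < n, IsUnit (m ! : K)) :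
    iSupIndep fun i : Fin n => (ker δ).map (g i) :=
  iSupIndep_of_le_ker_of_disjoint_ker (fun j : Fin n => δ ^ (j : ℕ))
    (fun _ _ hij => h.map_le_ker_pow hij) (fun j => h.disjoint_map_ker_pow (hn j j.isLt))

theorem iSup_map_eq_top {n : ℕ} (hnil : δ ^ n = 0) (hn : ∀ m < n, IsUnit (m ! : K)) :
    ⨆ i : Fin n, (ker δ).map (g i) = ⊤ := by
  rw [← biSup_range_eq_iSup_fin n fun i => (ker δ).map (g i), ← h.ker_pow_eq_iSup hn, hnil,
    ker_zero]

end IsMonomialFamily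

end Module.End

section Derivation

variable {K A : Type*} [CommRing K] [Ring A] [Algebra K A] {δ : Module.End K A}
  (hleib : ∀ a b : A, δ (a * b) = δ a * b + a * δ b) {x : A} (hx : δ x = 1)
include hleib hx

theorem apply_pow_succ_of_apply_eq_one (n : ℕ) : δ (x ^ (n + 1)) = (n + 1) • x ^ n := by
  induction n with
  | zero => simpa using hx
  | succ n ih =>
    rw [pow_succ, hleib, ih, hx, mul_one, smul_mul_assoc, ← pow_succ, succ_nsmul _ (n + 1)]

theorem isMonomialFamily_mulRight : Module.End.IsMonomialFamily δ fun n => mulRight K (x ^ n) where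
  zero_apply c _ := by simp
  apply_succ n c hc := by
    rw [mulRight_apply, hleib, mem_ker.mp hc, zero_mul, zero_add,
      apply_pow_succ_of_apply_eq_one hleib hx, mul_smul_comm, mulRight_apply]

theorem isMonomialFamily_mulLeft : Module.End.IsMonomialFamily δ fun n => mulLeft K (x ^ n) where
  zero_apply c _ := by simp
  apply_succ n c hc := by
    rw [mulLeft_apply, hleib, mem_ker.mp hc, mul_zero, add_zero,
      apply_pow_succ_of_apply_eq_one hleib hx, smul_mul_assoc, mulLeft_apply]

theorem apply_commutator_eq_zero {c : A} (hc : δ c = 0) : δ (x * c - c * x) = 0 := by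
  rw [map_sub, hleib, hleib, hx, hc]
  simp

end Derivation

/-- Suppose `char K = p > 0`, `δ` is a `K`-derivation of `A` with
`δ^p = 0` and `δ x = 1` for some `x ∈ A`.  Then
`A = ⊕_{i=0}^{p-1} A^δ·x^i = ⊕_{i=0}^{p-1} x^i·A^δ` as internal direct sums of
`K`-subspaces, with `ker δ^{n+1} = ⊕_{i=0}^{n} A^δ·x^i = ⊕_{i=0}^{n} x^i·A^δ` for
`0 ≤ n ≤ p-1`; moreover `[x, A^δ] ⊆ A^δ`, i.e. `ad x` restricts to a derivation of
`A^δ`. -/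
theorem stmt_7 {K A : Type*} [Field K] [Ring A] [Algebra K A]
    (p : ℕ) (hp : p.Prime) (hcharK : CharP K p)
    (δ : Module.End K A) (hleib : ∀ a b : A, δ (a * b) = δ a * b + a * δ b)
    (hnil : δ ^ p = 0) (x : A) (hx : δ x = 1) :
    iSupIndep (fun i : Fin p => (ker δ).map (mulRight K (x ^ (i : ℕ)))) ∧
    iSupIndep (fun i : Fin p => (ker δ).map (mulLeft K (x ^ (i : ℕ)))) ∧
    (⨆ i : Fin p, (ker δ).map (mulRight K (x ^ (i : ℕ)))) = ⊤ ∧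
    (⨆ i : Fin p, (ker δ).map (mulLeft K (x ^ (i : ℕ)))) = ⊤ ∧
    (∀ n : ℕ, n < p → ker (δ ^ (n + 1)) =
      ⨆ i ∈ Finset.range (n + 1), (ker δ).map (mulRight K (x ^ i))) ∧
    (∀ n : ℕ, n < p → ker (δ ^ (n + 1)) =
      ⨆ i ∈ Finset.range (n + 1), (ker δ).map (mulLeft K (x ^ i))) ∧
    (∀ c : A, δ c = 0 → δ (x * c - c * x) = 0) := by
  have : Fact p.Prime := ⟨hp⟩
  have hfac : ∀ m < p, IsUnit (m ! : K) := fun m => (IsUnit.natCast_factorial_iff_of_charP p).mpr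
  have hfac_succ (n : ℕ) (hn : n < p) : ∀ m < n + 1, IsUnit (m ! : K) :=
    fun m hm => hfac m (by omega)
  have hR := isMonomialFamily_mulRight hleib hx
  have hL := isMonomialFamily_mulLeft hleib hx
  exact ⟨hR.iSupIndep_map hfac, hL.iSupIndep_map hfac, hR.iSup_map_eq_top hnil hfac,
    hL.iSup_map_eq_top hnil hfac, fun n hn => hR.ker_pow_eq_iSup (hfac_succ n hn),
    fun n hn => hL.ker_pow_eq_iSup (hfac_succ n hn), fun _ => apply_commutator_eq_zero hleib hx⟩
end

section
/- Let K be a commutative ring in which p·1 = 0 for a prime p, and for k ≥ 0 let φ_k be the K-linear operator on K[X] given by φ_k(u) := Σ_{j=0}^{p-1} (-1)^j · X^{p^k·j} · D^{(p^k·j)}(u), where D^{(m)} is the m-th Hasse derivative. Then for every m ≥ 1 and every u ∈ K[X] of degree < p^m, the composition (φ_{m-1}∘⋯∘φ_1∘φ_0)(u) equals the constant polynomial whose value is the constant coefficient of u. Consequently (Taylor formula in prime characteristic, one variable): for every d, (φ_{m-1}∘⋯∘φ_0)(D^{(d)}(u)) is the constant polynomial with value coeff_d(u), and u = Σ_{d=0}^{p^m-1}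 (φ_{m-1}∘⋯∘φ_0)(D^{(d)}(u))·X^d. -/
open Polynomial

/-- The operator `φ_k : u ↦ ∑_{j=0}^{p-1} (-1)^j X^{p^k j} D^{(p^k j)}(u)` on `K[X]`. -/
noncomputable def phiOp {K : Type*} [CommRing K] (p k : ℕ) (u : Polynomial K) :
    Polynomial K :=
  ∑ j ∈ Finset.range p, (-1 : Polynomial K) ^ j * (X ^ (p ^ k * j) * hasseDeriv (p ^ k * j) u)

/-- The composition `φ_{m-1} ∘ ⋯ ∘ φ_1 ∘ φ_0` on `K[X]`. -/
noncomputable def phiComp {K : Type*} [CommRing K] (p : ℕ) : ℕ → Polynomial K → Polynomial K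
  | 0 => id
  | m + 1 => phiOp p m ∘ phiComp p m

/-! By Lucas's theorem, `binom(n, p^k j) ≡ binom(n_k, j) mod p` for `j < p`, where `n_k` is the
`k`-th base-`p` digit of `n`; so the alternating sum `∑_{j<p} (-1)^j binom(n, p^k j)` is `1` if
`n_k = 0` and `0` otherwise. Since `X^a D^{(a)}` multiplies the coefficient of `X^n` by
`binom(n, a)`, `φ_k` is the diagonal projection killing the monomials whose `k`-th digit is
nonzero. Thus `φ_{m-1} ∘ ⋯ ∘ φ_0` keeps only the `X^n` whose `m` lowest digits vanish, i.e. for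
`n < p^m` only `n = 0`. The Taylor formula follows from `coeff_0 (D^{(d)} u) = coeff_d u`. -/

theorem Nat.ModEq.natCast_eq {K : Type*} [CommRing K] {p a b : ℕ} (hchar : (p : K) = 0)
    (h : a ≡ b [MOD p]) : (a : K) = b :=
  AddCommGroup.modEq_zero.1 (hchar ▸ AddCommGroup.ModEq.natCast h)

theorem Nat.choose_pow_mul_modEq_choose_digit {p : ℕ} (hp : p.Prime) (k n j : ℕ) (hj : j < p) :
    n.choose (p ^ k * j) ≡ (n / p ^ k % p).choose j [MOD p] := by
  have : Fact p.Prime := ⟨hp⟩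
  induction k generalizing n with
  | zero =>
    simpa [Nat.mod_eq_of_lt hj, Nat.div_eq_of_lt hj] using
      Choose.choose_modEq_choose_mod_mul_choose_div_nat (n := n) (k := j) (p := p)
  | succ k ih =>
    have h := Choose.choose_modEq_choose_mod_mul_choose_div_nat (n := n) (k := p ^ (k + 1) * j)
      (p := p)
    rw [pow_succ', mul_assoc, Nat.mul_mod_right, Nat.mul_div_cancel_left _ hp.pos,
      Nat.choose_zero_right, one_mul] at h
    rw [pow_succ', mul_assoc, ← Nat.div_div_eq_div_mul]
    exact h.trans (ih (n / p))

theorem sum_range_neg_one_pow_mul_choose_pow_mul {K : Type*} [CommRing K] {p : ℕ} (hp : p.Prime)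
    (hchar : (p : K) = 0) (k n : ℕ) :
    ∑ j ∈ Finset.range p, (-1 : K) ^ j * (n.choose (p ^ k * j) : K) =
      if n / p ^ k % p = 0 then 1 else 0 := by
  set e := n / p ^ k % p
  have he : e + 1 ≤ p := Nat.mod_lt _ hp.pos
  calc ∑ j ∈ Finset.range p, (-1 : K) ^ j * (n.choose (p ^ k * j) : K)
      = ∑ j ∈ Finset.range p, (-1 : K) ^ j * (e.choose j : K) :=
        Finset.sum_congr rfl fun j hj => by
          rw [(Nat.choose_pow_mul_modEq_choose_digit hp k n j (Finset.mem_range.1 hj)).natCast_eq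
            hchar]
    _ = ∑ j ∈ Finset.range (e + 1), (-1 : K) ^ j * (e.choose j : K) := by
        refine (Finset.sum_subset (Finset.range_subset_range.2 he) fun j _ hj => ?_).symm
        rw [Nat.choose_eq_zero_of_lt (by simpa using hj), Nat.cast_zero, mul_zero]
    _ = ((∑ j ∈ Finset.range (e + 1), (-1) ^ j * e.choose j : ℤ) : K) := by push_cast; rfl
    _ = if e = 0 then 1 else 0 := by rw [Int.alternating_sum_range_choose]; split_ifs <;> simp

theorem Polynomial.coeff_X_pow_mul_hasseDeriv {R : Type*} [Semiring R] (f : R[X]) (k n : ℕ) :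
    (X ^ k * hasseDeriv k f).coeff n = n.choose k * f.coeff n := by
  rw [coeff_X_pow_mul']
  split_ifs with h
  · rw [hasseDeriv_coeff, Nat.sub_add_cancel h]
  · rw [Nat.choose_eq_zero_of_lt (not_le.1 h), Nat.cast_zero, zero_mul]

theorem Nat.eq_zero_of_lt_pow_of_digits_eq_zero {p : ℕ} (hp : 0 < p) :
    ∀ {m n : ℕ}, n < p ^ m → (∀ k < m, n / p ^ k % p = 0) → n = 0
  | 0, n, hn, _ => by simpa using hn
  | m + 1, n, hn, hdig => by
    have hmod : n % p = 0 := by simpa using hdig 0 m.succ_pos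
    have hdiv : n / p = 0 := by
      refine Nat.eq_zero_of_lt_pow_of_digits_eq_zero hp (m := m) ?_ fun k hk => ?_
      · rwa [Nat.div_lt_iff_lt_mul hp, ← pow_succ]
      · rw [Nat.div_div_eq_div_mul, ← pow_succ']; exact hdig (k + 1) (by omega)
    rw [← Nat.div_add_mod n p, hmod, hdiv]; rfl

section

variable {K : Type*} [CommRing K] {p : ℕ}

theorem coeff_phiOp (hp : p.Prime) (hchar : (p : K) = 0) (k : ℕ) (u : K[X]) (n : ℕ) :
    (phiOp p k u).coeff n = if n / p ^ k % p = 0 then u.coeff n else 0 := by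
  simp only [phiOp, finsetSum_coeff, ← C_1, ← C_neg, ← C_pow, coeff_C_mul,
    coeff_X_pow_mul_hasseDeriv]
  simp_rw [← mul_assoc]
  rw [← Finset.sum_mul, sum_range_neg_one_pow_mul_choose_pow_mul hp hchar, ite_mul, one_mul,
    zero_mul]

theorem coeff_phiComp (hp : p.Prime) (hchar : (p : K) = 0) (m : ℕ) (u : K[X]) (n : ℕ) :
    (phiComp p m u).coeff n = if ∀ k < m, n / p ^ k % p = 0 then u.coeff n else 0 := by
  induction m with
  | zero => simp [phiComp]
  | succ m ih =>
    rw [phiComp, Function.comp_apply, coeff_phiOp hp hchar, ih]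
    simp only [Nat.forall_lt_succ_right, ite_and]
    split_ifs <;> rfl

theorem phiComp_eq_C_coeff_zero (hp : p.Prime) (hchar : (p : K) = 0) {m : ℕ} {u : K[X]}
    (hu : u.natDegree < p ^ m) :
    phiComp p m u = C (u.coeff 0) := by
  ext n
  rw [coeff_phiComp hp hchar, coeff_C]
  split_ifs with hdig hn hn
  · rw [hn]
  · exact coeff_eq_zero_of_natDegree_lt <| hu.trans_le <| not_lt.1 fun h =>
      hn (Nat.eq_zero_of_lt_pow_of_digits_eq_zero hp.pos h hdig)
  · exact absurd (fun k _ => by rw [hn, Nat.zero_div, Nat.zero_mod]) hdig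
  · rfl

theorem phiComp_hasseDeriv (hp : p.Prime) (hchar : (p : K) = 0) {m : ℕ} {u : K[X]}
    (hu : u.natDegree < p ^ m) (d : ℕ) :
    phiComp p m (hasseDeriv d u) = C (u.coeff d) := by
  have hdeg : (hasseDeriv d u).natDegree < p ^ m :=
    (natDegree_hasseDeriv_le u d).trans_lt ((Nat.sub_le _ _).trans_lt hu)
  rw [phiComp_eq_C_coeff_zero hp hchar hdeg, hasseDeriv_coeff, zero_add, Nat.choose_self,
    Nat.cast_one, one_mul]

end

theorem stmt_18_general {K : Type*} [CommRing K] (p : ℕ) (hp : p.Prime) (hchar : (p : K) = 0)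
    (m : ℕ) :
    (∀ u : Polynomial K, u.natDegree < p ^ m →
      phiComp p m u = C (u.coeff 0)) ∧
    (∀ u : Polynomial K, u.natDegree < p ^ m → ∀ d : ℕ,
      phiComp p m (hasseDeriv d u) = C (u.coeff d)) ∧
    (∀ u : Polynomial K, u.natDegree < p ^ m →
      u = ∑ d ∈ Finset.range (p ^ m), phiComp p m (hasseDeriv d u) * X ^ d) := by
  refine ⟨fun u hu => phiComp_eq_C_coeff_zero hp hchar hu,
    fun u hu => phiComp_hasseDeriv hp hchar hu, fun u hu => ?_⟩
  simp only [phiComp_hasseDeriv hp hchar hu]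
  exact u.as_sum_range_C_mul_X_pow' hu

/-- Let `K` be a commutative ring with `p·1 = 0` for a prime `p`.  Then
for every `m ≥ 1` and every `u ∈ K[X]` of degree `< p^m`, the composition
`(φ_{m-1}∘⋯∘φ_0)(u)` is the constant polynomial whose value is the constant coefficient
of `u`.  Consequently (Taylor formula in prime characteristic, one variable): for every
`d`, `(φ_{m-1}∘⋯∘φ_0)(D^{(d)}(u))` is the constant polynomial with value `coeff d u`, and
`u = ∑_{d=0}^{p^m - 1} (φ_{m-1}∘⋯∘φ_0)(D^{(d)}(u))·X^d`. -/
theorem stmt_18 {K : Type*} [CommRing K] (p : ℕ) (hp : p.Prime) (hchar : (p : K) = 0)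
    (m : ℕ) (hm : 1 ≤ m) :
    (∀ u : Polynomial K, u.natDegree < p ^ m →
      phiComp p m u = C (u.coeff 0)) ∧
    (∀ u : Polynomial K, u.natDegree < p ^ m → ∀ d : ℕ,
      phiComp p m (hasseDeriv d u) = C (u.coeff d)) ∧
    (∀ u : Polynomial K, u.natDegree < p ^ m →
      u = ∑ d ∈ Finset.range (p ^ m), phiComp p m (hasseDeriv d u) * X ^ d) :=
  stmt_18_general p hp hchar m
end
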